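/- Let W ⊆ V be a subspace and let J : V ⊕ V* → V ⊕ V* be the linear map J(X+ξ) = (φ(X) + π(ξ)) + (σ(X) − φ*(ξ)), where φ : V → V is linear, π : V* → V is linear and skew-symmetric (ξ(π(η)) = −η(π(ξ)) for all ξ,η ∈ V*), σ : V → V* is linear, and φ* is the dual of φ. Then J({0} ⊕ W°) ∩ (W ⊕ V*) ⊆ {0} ⊕ W° holds if and only if W ∩ π(W°) = 0 and φ(W) ⊆ W + π(W°). -/
import Mathlib


/-- The map `J(X+ξ) = (φ(X) + π(ξ)) + (σ(X) - φ*(ξ))` on `V ⊕ V*` determined by the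
splitting `(φ, π, σ)`. -/
def splitMap {V : Type*} [AddCommGroup V] [Module ℝ V]
    (φ : V →ₗ[ℝ] V) (π : Module.Dual ℝ V →ₗ[ℝ] V) (σ : V →ₗ[ℝ] Module.Dual ℝ V) :
    (V × Module.Dual ℝ V) →ₗ[ℝ] (V × Module.Dual ℝ V) :=
  LinearMap.prod
    (φ ∘ₗ LinearMap.fst ℝ V (Module.Dual ℝ V) + π ∘ₗ LinearMap.snd ℝ V (Module.Dual ℝ V))
    (σ ∘ₗ LinearMap.fst ℝ V (Module.Dual ℝ V)
      - φ.dualMap ∘ₗ LinearMap.snd ℝ V (Module.Dual ℝ V))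

/-- For `J` given by the splitting `(φ, π, σ)` with `π` skew-symmetric:
`J({0} ⊕ W°) ∩ (W ⊕ V*) ⊆ {0} ⊕ W°` iff `W ∩ π(W°) = 0` and `φ(W) ⊆ W + π(W°)`. -/
theorem stmt_11 {V : Type*} [AddCommGroup V] [Module ℝ V] [FiniteDimensional ℝ V]
    (W : Submodule ℝ V) (φ : V →ₗ[ℝ] V) (π : Module.Dual ℝ V →ₗ[ℝ] V)
    (hπ : ∀ ξ η : Module.Dual ℝ V, ξ (π η) = - η (π ξ))
    (σ : V →ₗ[ℝ] Module.Dual ℝ V) :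
    (Submodule.map (splitMap φ π σ) ((⊥ : Submodule ℝ V).prod W.dualAnnihilator)
        ⊓ W.prod ⊤ ≤ (⊥ : Submodule ℝ V).prod W.dualAnnihilator)
    ↔ (W ⊓ Submodule.map π W.dualAnnihilator = ⊥ ∧
        Submodule.map φ W ≤ W ⊔ Submodule.map π W.dualAnnihilator) := by
  have hmem : ∀ ξ : Module.Dual ℝ V, ξ ∈ W.dualAnnihilator →
      (π ξ, -(φ.dualMap ξ)) ∈
        Submodule.map (splitMap φ π σ) ((⊥ : Submodule ℝ V).prod W.dualAnnihilator) := by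
    intro ξ hξ
    refine ⟨(0, ξ), ⟨Submodule.zero_mem _, hξ⟩, ?_⟩
    simp [splitMap]
  constructor
  · intro h
    constructor
    · rw [eq_bot_iff]
      rintro x ⟨hxW, ξ, hξ, rfl⟩
      have := h ⟨hmem ξ hξ, hxW, trivial⟩
      simpa using this.1
    · rw [← Subspace.dualAnnihilator_le_dualAnnihilator_iff,
        Submodule.dualAnnihilator_sup_eq]
      rintro ξ ⟨hξW, hξπ⟩
      simp only [SetLike.mem_coe, Submodule.mem_dualAnnihilator] at hξπ
      have hπξW : π ξ ∈ W := by
        rw [← Subspace.dualAnnihilator_dualCoannihilator_eq (W := W),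
          Submodule.mem_dualCoannihilator]
        intro η hη
        have := hξπ (π η) ⟨η, hη, rfl⟩
        rw [hπ ξ η] at this
        linarith
      have := h ⟨hmem ξ hξW, hπξW, trivial⟩
      have h2 := this.2
      rw [Submodule.mem_dualAnnihilator]
      rintro y ⟨w, hw, rfl⟩
      simp only [SetLike.mem_coe, Submodule.mem_dualAnnihilator] at h2
      have := h2 w hw
      simpa using this
  · rintro ⟨ha, hb⟩
    rintro ⟨x, ζ⟩ ⟨⟨⟨y, η⟩, ⟨hy0, hη⟩, heq⟩, hxW, -⟩
    simp only [Submodule.mem_bot] at hy0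
    subst hy0
    have hx : x = π η ∧ ζ = -(φ.dualMap η) := by
      have h1 := congrArg Prod.fst heq
      have h2 := congrArg Prod.snd heq
      simp [splitMap] at h1 h2
      exact ⟨h1.symm, h2.symm⟩
    obtain ⟨rfl, rfl⟩ := hx
    have hx0 : π η = 0 := by
      have : π η ∈ W ⊓ Submodule.map π W.dualAnnihilator :=
        ⟨hxW, η, hη, rfl⟩
      rw [ha] at this
      simpa using this
    refine ⟨by simpa using hx0, ?_⟩
    show -(φ.dualMap η) ∈ W.dualAnnihilator
    rw [Submodule.mem_dualAnnihilator]
    intro w hw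
    have hφw : φ w ∈ W ⊔ Submodule.map π W.dualAnnihilator := hb ⟨w, hw, rfl⟩
    rw [Submodule.mem_sup] at hφw
    obtain ⟨u, hu, z, ⟨ζ', hζ', rfl⟩, huv⟩ := hφw
    have hηu : η u = 0 := (Submodule.mem_dualAnnihilator _).mp hη u hu
    have hηπ : η (π ζ') = 0 := by
      rw [hπ η ζ', hx0]
      simp
    simp only [LinearMap.neg_apply, LinearMap.dualMap_apply, ← huv]
    rw [map_add, hηu, hηπ]
    simp
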